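/- arXiv:2108.11090 — 2 statements merged into one kernel-verified Lean document; each statement's English description precedes it below -/
import Mathlib

section
/- For every nonzero real number λ and every n ≥ 0, the identity (x)_{n,λ} = Σ_{k=0}^{n} S_{1,λ}(n,k) φ_{k,λ}(x) holds as polynomials in x. -/
/-!
Expanding φ_{k,λ}(x) = Σ_j S_{2,λ}(k,j) (x)_{j,λ}, the identity reduces to the orthogonality
Σ_k S_{1,λ}(n,k) S_{2,λ}(k,j) = δ_{nj}, which is the coefficient of tⁿ in
(e_λ(log_λ(1+t)) - 1)^j = t^j. The composite G = e_λ(log_λ(1+t)) is pinned down by differential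
equations: (1+λt) e_λ' = e_λ and (1+t) L' = 1 + λL for L = log_λ(1+t), so by the chain rule
(1+t) G' = G with G(0) = 1, which forces G = 1+t.
-/

open Nat PowerSeries Finset

noncomputable section

/-- λ-falling factorial (x)_{n,λ} = x(x−λ)···(x−(n−1)λ). -/
def dfall (l x : ℝ) (n : ℕ) : ℝ := ∏ i ∈ range n, (x - i * l)

/-- degenerate exponential e_λ^x(t) = Σ (x)_{n,λ} t^n/n! as a formal power series. -/
def degExp (l x : ℝ) : PowerSeries ℝ := PowerSeries.mk fun n => dfall l x n / n !

/-- degenerate logarithm log_λ(1+t) = Σ_{n≥1} (∏_{j=1}^{n−1}(λ−j)) t^n/n!. -/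
def degLog (l : ℝ) : PowerSeries ℝ :=
  PowerSeries.mk fun n => if n = 0 then 0 else (∏ j ∈ range (n - 1), (l - (j + 1))) / n !

/-- composition Σ_k a_k f^k, valid when f has zero constant term. -/
def psComp (a : ℕ → ℝ) (f : PowerSeries ℝ) : PowerSeries ℝ :=
  PowerSeries.mk fun n => ∑ k ∈ range (n + 1), a k * PowerSeries.coeff (R := ℝ) n (f ^ k)

/-- e_λ^x(f), the degenerate exponential composed with f (f with zero constant term). -/
def degExpComp (l x : ℝ) (f : PowerSeries ℝ) : PowerSeries ℝ :=
  psComp (fun k => dfall l x k / k !) f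

/-- degenerate Stirling numbers of the second kind. -/
def dS2 (l : ℝ) (n k : ℕ) : ℝ :=
  (n ! : ℝ) / k ! * PowerSeries.coeff (R := ℝ) n ((degExp l 1 - 1) ^ k)

/-- degenerate Stirling numbers of the first kind. -/
def dS1 (l : ℝ) (n k : ℕ) : ℝ :=
  (n ! : ℝ) / k ! * PowerSeries.coeff (R := ℝ) n (degLog l ^ k)

/-- (signed) Stirling numbers of the first kind: coefficients of x(x-1)···(x-n+1). -/
def sS1 (n k : ℕ) : ℝ := (descPochhammer ℝ n).coeff k

/-- fully degenerate Bell polynomial φ_{n,λ}(x). -/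
def dBell (l : ℝ) (n : ℕ) (x : ℝ) : ℝ := ∑ k ∈ range (n + 1), dS2 l n k * dfall l x k

/-- degenerate Whitney numbers of the second kind. -/
def dW (m : ℕ) (l : ℝ) (n k : ℕ) : ℝ :=
  (n ! : ℝ) / k ! *
    PowerSeries.coeff (R := ℝ) n (degExp l 1 * ((degExp l (m : ℝ) - 1) * PowerSeries.C (R := ℝ) (1 / m)) ^ k)

/-- fully degenerate Dowling polynomial d_{m,λ}(n,x). -/
def dDowling (m : ℕ) (l : ℝ) (n : ℕ) (x : ℝ) : ℝ :=
  ∑ k ∈ range (n + 1), dW m l n k * dfall l x k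

/-- division of a power series by t (coefficient shift). -/
def divT (f : PowerSeries ℝ) : PowerSeries ℝ :=
  PowerSeries.mk fun n => PowerSeries.coeff (R := ℝ) (n + 1) f

/-- degenerate Bernoulli polynomials β_{n,λ}(x): (t/(e_λ(t)−1)) e_λ^x(t) = Σ β_{n,λ}(x) tⁿ/n!. -/
def dBernoulliPoly (l : ℝ) (n : ℕ) (x : ℝ) : ℝ :=
  (n ! : ℝ) * PowerSeries.coeff (R := ℝ) n ((divT (degExp l 1 - 1))⁻¹ * degExp l x)

/-- the λ-falling factorial polynomial (x)_{k,λ}. -/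
def dfallPoly (l : ℝ) (k : ℕ) : Polynomial ℝ :=
  ∏ i ∈ range k, (Polynomial.X - Polynomial.C (i * l))

/-- degenerate poly-Bell polynomials B^{(r)}_{n,λ}(x). -/
def dPolyBell (r : ℤ) (l : ℝ) (n : ℕ) (x : ℝ) : ℝ :=
  (n ! : ℝ) * PowerSeries.coeff (R := ℝ) n
    (divT (psComp (fun k => if k = 0 then 0 else dfall l 1 k / ((k - 1)! * (k : ℝ) ^ r))
        (degLog l)) *
      (divT (degExp l 1 - 1))⁻¹ * degExp l x)

/-- degenerate Bernoulli polynomials of the second kind b_{n,λ}(x). -/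
def dBern2 (l : ℝ) (n : ℕ) (x : ℝ) : ℝ :=
  (n ! : ℝ) *
    PowerSeries.coeff (R := ℝ) n ((divT (degLog l))⁻¹ * PowerSeries.mk fun j => dfall 1 x j / j !)

namespace PowerSeries

theorem coeff_pow_eq_zero_of_lt {R : Type*} [CommSemiring R] {f : R⟦X⟧}
    (hf : constantCoeff f = 0) {n k : ℕ} (h : n < k) : coeff n (f ^ k) = 0 :=
  X_pow_dvd_iff.1 (pow_dvd_pow_of_dvd (X_dvd_iff.2 hf) k) n h

theorem coeff_X_mul_derivative {R : Type*} [CommSemiring R] (f : R⟦X⟧) (n : ℕ) :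
    coeff n (X * d⁄dX R f) = n * coeff n f := by
  cases n with
  | zero => simp
  | succ m => rw [coeff_succ_X_mul, coeff_derivative, mul_comm]; push_cast; ring

section Subst

variable {R : Type*} [CommRing R] {L : R⟦X⟧}

theorem coeff_subst_eq_sum_range (hL : constantCoeff L = 0) (A : R⟦X⟧) (n : ℕ) :
    coeff n (A.subst L) = ∑ k ∈ range (n + 1), coeff k A * coeff n (L ^ k) := by
  rw [coeff_subst' (HasSubst.of_constantCoeff_zero' hL)]
  refine finsum_eq_sum_of_support_subset _ fun k hk => ?_
  by_contra hkn
  simp only [coe_range, Set.mem_Iio, not_lt] at hkn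
  exact hk (by simp only [coeff_pow_eq_zero_of_lt hL (by omega : n < k), smul_zero])

theorem subst_one (hL : HasSubst L) : (1 : R⟦X⟧).subst L = 1 := by
  rw [← coe_substAlgHom hL, map_one]

theorem subst_one_add_C_mul_X (hL : HasSubst L) (c : R) :
    (1 + C c * X : R⟦X⟧).subst L = 1 + C c * L := by
  rw [subst_add hL, subst_one hL, subst_mul hL, subst_X hL, subst_C]
  rfl

end Subst

theorem eq_of_mul_derivative_eq {K : Type*} [Field K] [CharZero K] {P G : K⟦X⟧}
    (hP : constantCoeff P ≠ 0) (hPG : P * d⁄dX K G = d⁄dX K P * G)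
    (h0 : constantCoeff G = constantCoeff P) : G = P := by
  have hinv : P⁻¹ * P = 1 := PowerSeries.inv_mul_cancel P hP
  have hquot : P⁻¹ * G = 1 := by
    refine derivative.ext ?_ ?_
    · calc d⁄dX K (P⁻¹ * G) = P⁻¹ ^ 2 * (P * d⁄dX K G - d⁄dX K P * G) := by
            rw [Derivation.leibniz, derivative_inv', smul_eq_mul, smul_eq_mul]
            linear_combination (-(d⁄dX K G * P⁻¹)) * hinv
        _ = d⁄dX K 1 := by rw [hPG, sub_self, mul_zero, derivative_one]
    · rw [map_mul, h0, map_one, PowerSeries.constantCoeff_inv, inv_mul_cancel₀ hP]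
  calc G = P * (P⁻¹ * G) := by linear_combination (-G) * hinv
    _ = P := by rw [hquot, mul_one]

end PowerSeries

theorem dfall_succ (l x : ℝ) (n : ℕ) : dfall l x (n + 1) = dfall l x n * (x - n * l) :=
  prod_range_succ _ n

theorem constantCoeff_degLog (l : ℝ) : constantCoeff (degLog l) = 0 := by
  simp [degLog, ← coeff_zero_eq_constantCoeff_apply]

theorem one_add_C_mul_X_mul_derivative_degExp (l : ℝ) :
    (1 + C l * X) * d⁄dX ℝ (degExp l 1) = degExp l 1 := by
  ext n
  rw [add_mul, one_mul, mul_assoc, map_add, coeff_C_mul, coeff_X_mul_derivative,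
    coeff_derivative]
  simp only [degExp, coeff_mk, dfall_succ, factorial_succ]
  push_cast
  field_simp
  ring

theorem one_add_X_mul_derivative_degLog (l : ℝ) :
    (1 + X) * d⁄dX ℝ (degLog l) = 1 + C l * degLog l := by
  ext n
  rw [add_mul, one_mul, map_add, coeff_X_mul_derivative, coeff_derivative, map_add, coeff_C_mul]
  cases n with
  | zero => simp [degLog]
  | succ m =>
    simp only [degLog, coeff_mk, coeff_one, succ_ne_zero, if_false, add_tsub_cancel_right,
      prod_range_succ, factorial_succ]
    push_cast
    field_simp
    ring

theorem subst_degLog_degExp (l : ℝ) : (degExp l 1).subst (degLog l) = 1 + X := by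
  have hL : HasSubst (degLog l) := HasSubst.of_constantCoeff_zero' (constantCoeff_degLog l)
  set G := (degExp l 1).subst (degLog l)
  have hG : (1 + X) * d⁄dX ℝ G = G := by
    calc (1 + X) * d⁄dX ℝ G
        = (1 + C l * degLog l) * (d⁄dX ℝ (degExp l 1)).subst (degLog l) := by
          rw [derivative_subst hL, ← one_add_X_mul_derivative_degLog]; ring
      _ = G := by
          rw [← subst_one_add_C_mul_X hL, ← subst_mul hL, one_add_C_mul_X_mul_derivative_degExp]
  refine eq_of_mul_derivative_eq (by simp) ?_ ?_
  · rw [hG, map_add, derivative_one, derivative_X, zero_add, one_mul]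
  · rw [← coeff_zero_eq_constantCoeff_apply, coeff_subst_eq_sum_range (constantCoeff_degLog l)]
    simp [degExp, dfall]

theorem constantCoeff_degExp_sub_one (l : ℝ) : constantCoeff (degExp l 1 - 1) = 0 := by
  rw [map_sub, map_one, ← coeff_zero_eq_constantCoeff_apply]
  simp [degExp, dfall]

theorem dS2_eq_zero_of_lt (l : ℝ) {n k : ℕ} (h : n < k) : dS2 l n k = 0 := by
  rw [dS2, coeff_pow_eq_zero_of_lt (constantCoeff_degExp_sub_one l) h, mul_zero]

theorem sum_dS1_mul_dS2 (l : ℝ) (n j : ℕ) :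
    ∑ k ∈ range (n + 1), dS1 l n k * dS2 l k j = if n = j then 1 else 0 := by
  have hL : HasSubst (degLog l) := HasSubst.of_constantCoeff_zero' (constantCoeff_degLog l)
  have hpow : ((degExp l 1 - 1) ^ j).subst (degLog l) = X ^ j := by
    rw [subst_pow hL, subst_sub hL, subst_degLog_degExp, subst_one hL, add_sub_cancel_left]
  calc ∑ k ∈ range (n + 1), dS1 l n k * dS2 l k j
      = (n ! : ℝ) / j ! * coeff n (((degExp l 1 - 1) ^ j).subst (degLog l)) := by
        rw [coeff_subst_eq_sum_range (constantCoeff_degLog l), mul_sum]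
        refine sum_congr rfl fun k _ => ?_
        have hk : (k ! : ℝ) ≠ 0 := cast_ne_zero.2 (factorial_ne_zero k)
        rw [dS1, dS2]
        field_simp
    _ = if n = j then 1 else 0 := by
        rw [hpow, coeff_X_pow]
        split_ifs with h
        · rw [h, mul_one, div_self (cast_ne_zero.2 (factorial_ne_zero j))]
        · rw [mul_zero]

theorem dBell_eq_sum_range_of_le (l x : ℝ) {k n : ℕ} (hk : k ≤ n) :
    dBell l k x = ∑ j ∈ range (n + 1), dS2 l k j * dfall l x j := by
  refine sum_subset (range_subset_range.2 (succ_le_succ hk)) fun j _ hj => ?_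
  rw [dS2_eq_zero_of_lt l (by simpa using hj), zero_mul]

theorem stmt6_general (l : ℝ) (n : ℕ) (x : ℝ) :
    dfall l x n = ∑ k ∈ range (n + 1), dS1 l n k * dBell l k x := by
  calc dfall l x n
      = ∑ j ∈ range (n + 1), (if n = j then 1 else 0) * dfall l x j := by simp
    _ = ∑ j ∈ range (n + 1), ∑ k ∈ range (n + 1), dS1 l n k * (dS2 l k j * dfall l x j) := by
        refine sum_congr rfl fun j _ => ?_
        rw [← sum_dS1_mul_dS2 l, sum_mul]
        simp only [mul_assoc]
    _ = ∑ k ∈ range (n + 1), dS1 l n k * dBell l k x := by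
        rw [sum_comm]
        refine sum_congr rfl fun k hk => ?_
        rw [dBell_eq_sum_range_of_le l x (mem_range_succ_iff.1 hk), mul_sum]

theorem stmt6 (l : ℝ) (hl : l ≠ 0) (n : ℕ) (x : ℝ) :
    dfall l x n = ∑ k ∈ range (n + 1), dS1 l n k * dBell l k x :=
  stmt6_general l n x

end
end

section
/- Let λ be a nonzero real number, m a positive integer, and x a real number. Then the formal power series identity e_λ^x((e_λ^m(t)−1)/m) = Σ_{n≥0} m^n φ_{n,λ/m}(x/m) t^n/n! holds in ℝ[[t]]; equivalently, for every n ≥ 0 the coefficient of t^n/n! in e_λ^x((e_λ^m(t)−1)/m) equals m^n Σ_{k=0}^{n} S_{2,λ/m}(n,k)(x/m)_{k,λ/m}. -/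
open Nat PowerSeries Finset

noncomputable section

/-
Rescaling t ↦ m t turns e_λ^m(t) into e_{λ/m}(m t), and (x)_{k,λ} = m^k (x/m)_{k,λ/m} absorbs
the factor 1/m in front of e_λ^m(t) − 1. Hence e_λ^x((e_λ^m(t) − 1)/m) is e_{λ/m}^{x/m}(e_{λ/m}(t) − 1)
rescaled by m, and the latter is the generating function of the φ_{n,λ/m}(x/m).
-/

lemma dfall_div (l x c : ℝ) (k : ℕ) (hc : c ≠ 0) :
    dfall (l / c) (x / c) k = dfall l x k * (1 / c) ^ k := by
  have hpow : ∏ _i ∈ range k, 1 / c = (1 / c) ^ k := by rw [prod_const, card_range]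
  rw [dfall, dfall, ← hpow, ← prod_mul_distrib]
  refine prod_congr rfl fun i _ => ?_
  field_simp

lemma degExp_eq_rescale (l x c : ℝ) (hc : c ≠ 0) :
    degExp l x = rescale c (degExp (l / c) (x / c)) := by
  ext n
  rw [coeff_rescale, degExp, degExp, coeff_mk, coeff_mk, dfall_div l x c n hc, mul_div_assoc',
    mul_left_comm, ← mul_pow, mul_one_div_cancel hc, one_pow, mul_one]

lemma psComp_rescale (a : ℕ → ℝ) (f : PowerSeries ℝ) (c : ℝ) :
    psComp a (rescale c f) = rescale c (psComp a f) := by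
  ext n
  simp only [psComp, coeff_rescale, coeff_mk, ← map_pow, mul_sum]
  exact sum_congr rfl fun k _ => by ring

lemma psComp_mul_C (a : ℕ → ℝ) (f : PowerSeries ℝ) (c : ℝ) :
    psComp a (f * C c) = psComp (fun k => a k * c ^ k) f := by
  ext n
  simp only [psComp, coeff_mk, mul_pow, ← map_pow, coeff_mul_C]
  exact sum_congr rfl fun k _ => by ring

lemma degExpComp_mul_C_one_div (l x c : ℝ) (hc : c ≠ 0) (f : PowerSeries ℝ) :
    degExpComp l x (f * C (1 / c)) = degExpComp (l / c) (x / c) f := by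
  simp only [degExpComp, psComp_mul_C, dfall_div l x c _ hc]
  congr! 2
  ring

lemma factorial_mul_coeff_degExpComp_degExp_sub_one_eq_dBell (l x : ℝ) (n : ℕ) :
    (n ! : ℝ) * coeff n (degExpComp l x (degExp l 1 - 1)) = dBell l n x := by
  simp only [degExpComp, psComp, coeff_mk, dBell, dS2, mul_sum]
  exact sum_congr rfl fun k _ => by ring

theorem stmt13_general (l : ℝ) (m : ℕ) (hm : 0 < m) (x : ℝ) (n : ℕ) :
    (n ! : ℝ) *
        PowerSeries.coeff (R := ℝ) n
          (degExpComp l x ((degExp l (m : ℝ) - 1) * PowerSeries.C (R := ℝ) (1 / m))) =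
      (m : ℝ) ^ n * dBell (l / m) n (x / m) := by
  have hm₀ : (m : ℝ) ≠ 0 := Nat.cast_ne_zero.mpr hm.ne'
  have hrescale : degExp l m - 1 = rescale (m : ℝ) (degExp (l / m) 1 - 1) := by
    have h := degExp_eq_rescale l m m hm₀
    rw [div_self hm₀] at h
    rw [h, map_sub, map_one]
  rw [hrescale, degExpComp_mul_C_one_div l x m hm₀, degExpComp, psComp_rescale, coeff_rescale,
    ← degExpComp, mul_left_comm, factorial_mul_coeff_degExpComp_degExp_sub_one_eq_dBell]

theorem stmt13 (l : ℝ) (hl : l ≠ 0) (m : ℕ) (hm : 0 < m) (x : ℝ) (n : ℕ) :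
    (n ! : ℝ) *
        PowerSeries.coeff (R := ℝ) n
          (degExpComp l x ((degExp l (m : ℝ) - 1) * PowerSeries.C (R := ℝ) (1 / m))) =
      (m : ℝ) ^ n * dBell (l / m) n (x / m) :=
  stmt13_general l m hm x n

end
end
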